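/- arXiv:0905.3594 — 4 statements merged into one kernel-verified Lean document; each statement's English description precedes it below -/
import Mathlib

section
/- Let b₁ = b₂ = 1, b₃ = 3 and b₃ ≤ b₄ ≤ ⋯ ≤ b_k be positive integers such that T_{x₁} + T_{x₂} + 3T_{x₃} + b₄T_{x₄} + ⋯ represents 8. Then k ≥ 4 and b₄ ≤ 8. -/
/-!
Triangular numbers up to 8 are 0, 1, 3, 6, and a finite check shows that no combination
`T x + T y + 3 T z` of them equals 8. If the form had no fourth variable, or if `b₄ ≥ 9`, then by
monotonicity every coefficient past the third would be at least 9, so each of those terms, being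
at most 8, would vanish, and the first three variables alone would represent 8.
-/

def T (x : ℤ) : ℤ := x * (x + 1) / 2

lemma two_mul_T (x : ℤ) : 2 * T x = x * (x + 1) :=
  Int.two_mul_ediv_two_of_even (Int.even_mul_succ_self x)

lemma T_nonneg (x : ℤ) : 0 ≤ T x := by
  nlinarith [two_mul_T x, sq_nonneg (2 * x + 1)]

lemma T_eq_of_le_eight {x : ℤ} (h : T x ≤ 8) : T x = 0 ∨ T x = 1 ∨ T x = 3 ∨ T x = 6 := by
  have h2 := two_mul_T x
  have hx_le : x ≤ 3 := by nlinarith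
  have hx_ge : -4 ≤ x := by nlinarith
  interval_cases x <;> omega

lemma T_add_T_add_three_mul_T_ne_eight (x y z : ℤ) : T x + T y + 3 * T z ≠ 8 := by
  intro h
  have hx := T_nonneg x
  have hy := T_nonneg y
  have hz := T_nonneg z
  rcases T_eq_of_le_eight (x := x) (by omega) with _ | _ | _ | _ <;>
  rcases T_eq_of_le_eight (x := y) (by omega) with _ | _ | _ | _ <;>
  rcases T_eq_of_le_eight (x := z) (by omega) with _ | _ | _ | _ <;>
  omega

lemma Fin.sum_univ_eq_sum_castLE {M : Type*} [AddCommMonoid M] {m k : ℕ} (h : m ≤ k)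
    (f : Fin k → M) (hf : ∀ i : Fin k, m ≤ i.val → f i = 0) :
    ∑ i, f i = ∑ i : Fin m, f (Fin.castLE h i) := by
  obtain ⟨n, rfl⟩ := Nat.exists_eq_add_of_le h
  rw [Fin.sum_univ_add, Finset.sum_eq_zero fun i _ => hf (Fin.natAdd m i) (by simp), add_zero]
  rfl

theorem escalation_eight (k : ℕ) (b : Fin k → ℤ) (hb : ∀ i, 0 < b i)
    (hmono : Monotone b) (hk3 : 3 ≤ k)
    (hb1 : b ⟨0, by omega⟩ = 1) (hb2 : b ⟨1, by omega⟩ = 1)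
    (hb3 : b ⟨2, by omega⟩ = 3)
    (h8 : ∃ x : Fin k → ℤ, ∑ i, b i * T (x i) = 8) :
    ∃ hk : 4 ≤ k, b ⟨3, by omega⟩ ≤ 8 := by
  obtain ⟨x, hx⟩ := h8
  by_contra! hbig
  have hcoeff : ∀ i : Fin k, 3 ≤ i.val → 9 ≤ b i := fun i hi =>
    (hbig (by omega)).trans_le (hmono (Fin.mk_le_of_le_val hi))
  have hterm : ∀ i, b i * T (x i) ≤ 8 := fun i =>
    hx ▸ Finset.single_le_sum (fun j _ => mul_nonneg (hb j).le (T_nonneg _)) (Finset.mem_univ i)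
  have htail : ∀ i : Fin k, 3 ≤ i.val → b i * T (x i) = 0 := fun i hi => by
    obtain hT | hT := (T_nonneg (x i)).eq_or_lt
    · rw [← hT, mul_zero]
    · nlinarith [hterm i, hcoeff i hi]
  rw [Fin.sum_univ_eq_sum_castLE hk3 _ htail, Fin.sum_univ_three] at hx
  simp only [Fin.castLE] at hx
  exact T_add_T_add_three_mul_T_ne_eight _ _ _ (by simpa [hb1, hb2, hb3] using hx)
end

section
/- (Liouville, converse direction) If a ≤ b ≤ c are positive integers and aT_x + bT_y + cT_z represents every nonnegative integer, then (a,b,c) is one of (1,1,1), (1,1,2), (1,1,4), (1,1,5), (1,2,2), (1,2,3), (1,2,4). -/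
lemma T_mem_of_le_nine {x : ℤ} (h : T x ≤ 9) : T x ∈ ({0, 1, 3, 6} : Set ℤ) := by
  have hx : x * (x + 1) ≤ 18 := by linarith [two_mul_T x]
  have : x ≤ 4 := by nlinarith
  have : -5 ≤ x := by nlinarith
  interval_cases x <;> simp [T] at h ⊢

lemma T_le_of_mul_le {a n x : ℤ} (ha : 0 < a) (h : a * T x ≤ n) : T x ≤ n := by
  nlinarith [T_nonneg x]

lemma exists_small_triangular_of_eq {a b c n x y z : ℤ} (ha : 0 < a) (hb : 0 < b) (hc : 0 < c)
    (hn : n ≤ 9) (h : a * T x + b * T y + c * T z = n) :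
    ∃ X ∈ ({0, 1, 3, 6} : Set ℤ), ∃ Y ∈ ({0, 1, 3, 6} : Set ℤ), ∃ Z ∈ ({0, 1, 3, 6} : Set ℤ),
      a * X + b * Y + c * Z = n := by
  have hx : 0 ≤ a * T x := mul_nonneg ha.le (T_nonneg x)
  have hy : 0 ≤ b * T y := mul_nonneg hb.le (T_nonneg y)
  have hz : 0 ≤ c * T z := mul_nonneg hc.le (T_nonneg z)
  refine ⟨T x, T_mem_of_le_nine ?_, T y, T_mem_of_le_nine ?_, T z, T_mem_of_le_nine ?_, h⟩
  · exact (T_le_of_mul_le ha (by linarith)).trans hn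
  · exact (T_le_of_mul_le hb (by linarith)).trans hn
  · exact (T_le_of_mul_le hc (by linarith)).trans hn

theorem liouville_converse (a b c : ℤ) (ha : 0 < a) (hab : a ≤ b) (hbc : b ≤ c)
    (h : ∀ n : ℕ, ∃ x y z : ℤ, a * T x + b * T y + c * T z = (n : ℤ)) :
    (a, b, c) ∈ ({(1,1,1), (1,1,2), (1,1,4), (1,1,5), (1,2,2), (1,2,3), (1,2,4)} :
      Set (ℤ × ℤ × ℤ)) := by
  have small : ∀ n : ℕ, n ≤ 9 → ∃ X ∈ ({0, 1, 3, 6} : Set ℤ), ∃ Y ∈ ({0, 1, 3, 6} : Set ℤ),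
      ∃ Z ∈ ({0, 1, 3, 6} : Set ℤ), a * X + b * Y + c * Z = n := fun n hn ↦ by
    obtain ⟨x, y, z, hxyz⟩ := h n
    exact exists_small_triangular_of_eq ha (by omega) (by omega) (by omega) hxyz
  simp only [Set.mem_insert_iff, Set.mem_singleton_iff, exists_eq_or_imp, exists_eq_left,
    mul_zero, mul_one, add_zero, zero_add] at small
  obtain rfl : a = 1 := by have := small 1 (by norm_num); omega
  obtain rfl | rfl : b = 1 ∨ b = 2 := by have := small 2 (by norm_num); omega
  · have hc5 : c ≤ 5 := by have := small 5 (by norm_num); omega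
    have hc3 : c ≠ 3 := by have := small 8 (by norm_num); omega
    interval_cases c <;> simp at hc3 ⊢
  · have hc4 : c ≤ 4 := by have := small 4 (by norm_num); omega
    interval_cases c <;> simp
end

section
/- Let N ≥ 13 be an integer and define f^{(N)}(x,y) = N·T_x + N·T_y + (2xy + x + y) + 1. Then f^{(N)}(x,y) ≥ 0 for all integers x, y; f^{(N)} takes the value 0 exactly at (x,y) ∈ {(0,−1), (−1,0)} and the value 1 exactly at (x,y) ∈ {(0,0), (−1,−1)}; and for all other (x,y), f^{(N)}(x,y) ≥ N − 12. -/
def fN (N x y : ℤ) : ℤ := N * T x + N * T y + (2 * x * y + x + y) + 1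

lemma fN_comm (N x y : ℤ) : fN N x y = fN N y x := by
  unfold fN
  ring

lemma eight_mul_fN (N x y : ℤ) :
    8 * fN N x y = N * ((2 * x + 1) ^ 2 + (2 * y + 1) ^ 2 - 2) + 4 * (2 * x + 1) * (2 * y + 1) + 4 := by
  unfold fN
  linear_combination 4 * N * two_mul_T x + 4 * N * two_mul_T y

lemma one_le_sq_two_mul_add_one (x : ℤ) : 1 ≤ (2 * x + 1) ^ 2 :=
  one_le_sq_iff_one_le_abs _ |>.mpr (le_abs.mpr (by omega))

lemma nine_le_sq_two_mul_add_one {x : ℤ} (hx0 : x ≠ 0) (hx1 : x ≠ -1) : 9 ≤ (2 * x + 1) ^ 2 := by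
  have h3 : 3 ≤ |2 * x + 1| := le_abs.mpr (by omega)
  nlinarith [abs_mul_abs_self (2 * x + 1)]

lemma sub_two_le_fN_of_ne {N x : ℤ} (hN : 2 ≤ N) (hx0 : x ≠ 0) (hx1 : x ≠ -1) (y : ℤ) :
    N - 2 ≤ fN N x y := by
  have hu := nine_le_sq_two_mul_add_one hx0 hx1
  have hv := one_le_sq_two_mul_add_one y
  have hprod : 0 ≤ (N - 2) * ((2 * x + 1) ^ 2 + (2 * y + 1) ^ 2 - 10) :=
    mul_nonneg (by linarith) (by linarith)
  nlinarith [eight_mul_fN N x y, sq_nonneg (2 * x + 1 + (2 * y + 1))]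

lemma sub_two_le_fN {N x y : ℤ} (hN : 2 ≤ N) (hxy : ¬((x = 0 ∨ x = -1) ∧ (y = 0 ∨ y = -1))) :
    N - 2 ≤ fN N x y := by
  by_cases hx : x = 0 ∨ x = -1
  · have hy : y ≠ 0 ∧ y ≠ -1 := by tauto
    exact fN_comm N x y ▸ sub_two_le_fN_of_ne hN hy.1 hy.2 x
  · push Not at hx
    exact sub_two_le_fN_of_ne hN hx.1 hx.2 y

theorem fN_values (N : ℤ) (hN : 13 ≤ N)
    (f : ℤ → ℤ → ℤ) (hf : ∀ x y, f x y = N * T x + N * T y + (2 * x * y + x + y) + 1) :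
    (∀ x y : ℤ, 0 ≤ f x y) ∧
    (∀ x y : ℤ, f x y = 0 ↔ ((x, y) = (0, -1) ∨ (x, y) = (-1, 0))) ∧
    (∀ x y : ℤ, f x y = 1 ↔ ((x, y) = (0, 0) ∨ (x, y) = (-1, -1))) ∧
    (∀ x y : ℤ, (x, y) ∉ ({(0, -1), (-1, 0), (0, 0), (-1, -1)} : Set (ℤ × ℤ)) →
      N - 12 ≤ f x y) := by
  obtain rfl : f = fN N := funext₂ hf
  refine ⟨fun x y => ?_, fun x y => ?_, fun x y => ?_, fun x y => ?_⟩ <;>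
    by_cases hxy : (x = 0 ∨ x = -1) ∧ (y = 0 ∨ y = -1)
  all_goals first
    | rcases hxy with ⟨rfl | rfl, rfl | rfl⟩ <;> simp [fN, T]
    | have := sub_two_le_fN (N := N) (by linarith) hxy
      try simp only [Set.mem_insert_iff, Set.mem_singleton_iff, Prod.mk.injEq]
      omega
end

section
/- For every positive integer n there exists a quadratic polynomial f in finitely many integer variables with integer values, taking only nonnegative values on ℤ^k and attaining 0, such that f represents every nonnegative integer except n. -/
/-!
Write `n = p + 1` and let `G t = (p + 2) t² - (p + 1) t`, whose values are `0`, `1` and numbers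
`≥ 2p + 3`. The form
`G(u₁) + ⋯ + G(u_p) + (p + 2)(y₁² + y₂² + y₃² + y₄²) + (2p + 3) G(w)`
is nonnegative. By Lagrange's four-square theorem it represents every `(p + 2) q + r` with
`r ≤ p` (set `r` of the `uⱼ` to `1`), and, since `2p + 3 = (p + 2) + (p + 1)`, every
`(p + 2) q + (p + 1)` with `q ≥ 1` (set `w = 1`). It misses `p + 1`: a value that small forces
`y = 0`, `G(w) = 0` and every `G(uⱼ) ≤ 1`, leaving at most `p`.
-/

open Finset

def gadget (N t : ℤ) : ℤ := (N + 1) * t ^ 2 - N * t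

@[simp] lemma gadget_zero (N : ℤ) : gadget N 0 = 0 := by simp [gadget]

@[simp] lemma gadget_one (N : ℤ) : gadget N 1 = 1 := by simp [gadget]

lemma gadget_eq_zero_or_one_or_ge {N : ℤ} (hN : 0 ≤ N) (t : ℤ) :
    gadget N t = 0 ∨ gadget N t = 1 ∨ 2 * N + 1 ≤ gadget N t := by
  have hG : gadget N t = N * (t * (t - 1)) + t ^ 2 := by unfold gadget; ring
  rcases (by omega : t = 0 ∨ t = 1 ∨ t ≤ -1 ∨ 2 ≤ t) with rfl | rfl | ht | ht
  · simp
  · simp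
  all_goals
    right; right
    have h2 : 2 ≤ t * (t - 1) := by nlinarith
    nlinarith

lemma gadget_nonneg {N : ℤ} (hN : 0 ≤ N) (t : ℤ) : 0 ≤ gadget N t := by
  rcases gadget_eq_zero_or_one_or_ge hN t with h | h | h <;> omega

lemma sum_gadget_indicator (N : ℤ) {p r : ℕ} (hr : r ≤ p) :
    ∑ j : Fin p, gadget N (if (j : ℕ) < r then 1 else 0) = r := by
  simp only [apply_ite (gadget N), gadget_one, gadget_zero, sum_boole, Fin.card_filter_val_lt]
  omega

lemma exists_sum_fin_four_sq_eq (q : ℕ) : ∃ y : Fin 4 → ℤ, ∑ i, y i ^ 2 = q := by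
  obtain ⟨a, b, c, d, h⟩ := Nat.sum_four_squares q
  exact ⟨![a, b, c, d], by simp [Fin.sum_univ_four]; exact_mod_cast h⟩

lemma Matrix.sum_diagonal_mul_mul {ι R : Type*} [Fintype ι] [DecidableEq ι] [CommSemiring R]
    (d x : ι → R) : ∑ i, ∑ j, Matrix.diagonal d i j * x i * x j = ∑ i, d i * x i ^ 2 := by
  simp [Matrix.diagonal_apply, ite_mul, sq, mul_assoc]

abbrev FormVar (p : ℕ) := Fin p ⊕ Fin 4 ⊕ Unit

def exceptionalForm (p : ℕ) (x : FormVar p → ℤ) : ℤ :=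
  ∑ j, gadget (p + 1) (x (.inl j)) + (p + 2) * ∑ i, x (.inr (.inl i)) ^ 2 +
    (2 * p + 3) * gadget (p + 1) (x (.inr (.inr ())))

def quadCoeff (p : ℕ) : FormVar p → ℤ :=
  Sum.elim (fun _ => p + 2) (Sum.elim (fun _ => p + 2) fun _ => (2 * p + 3) * (p + 2))

def linCoeff (p : ℕ) : FormVar p → ℤ :=
  Sum.elim (fun _ => -(p + 1)) (Sum.elim 0 fun _ => -((2 * p + 3) * (p + 1)))

lemma exceptionalForm_eq_sum_coeff (p : ℕ) (x : FormVar p → ℤ) :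
    exceptionalForm p x = ∑ i, (quadCoeff p i * x i ^ 2 + linCoeff p i * x i) := by
  simp only [exceptionalForm, gadget, Fintype.sum_sum_type, Fintype.sum_unique, quadCoeff,
    linCoeff, Sum.elim_inl, Sum.elim_inr, Pi.zero_apply, mul_sum, PUnit.default_eq_unit]
  ring_nf

lemma exceptionalForm_nonneg (p : ℕ) (x : FormVar p → ℤ) : 0 ≤ exceptionalForm p x := by
  have hN : (0 : ℤ) ≤ p + 1 := by positivity
  unfold exceptionalForm
  have hS := sum_nonneg fun j (_ : j ∈ univ) => gadget_nonneg hN (x (.inl j))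
  have hQ := sum_nonneg fun i (_ : i ∈ univ) => sq_nonneg (x (.inr (.inl i)))
  have hg := gadget_nonneg hN (x (.inr (.inr ())))
  positivity

lemma exceptionalForm_ne_succ (p : ℕ) (x : FormVar p → ℤ) :
    exceptionalForm p x ≠ p + 1 := by
  intro h
  have hN : (0 : ℤ) ≤ p + 1 := by positivity
  have hQ := sum_nonneg fun i (_ : i ∈ univ) => sq_nonneg (x (.inr (.inl i)))
  have hg := gadget_nonneg hN (x (.inr (.inr ())))
  have hle_sum (j : Fin p) : gadget (p + 1) (x (.inl j)) ≤ ∑ j, gadget (p + 1) (x (.inl j)) :=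
    single_le_sum (fun j _ => gadget_nonneg hN (x (.inl j))) (mem_univ j)
  have hS0 := sum_nonneg fun j (_ : j ∈ univ) => gadget_nonneg hN (x (.inl j))
  have hS : ∑ j, gadget (p + 1) (x (.inl j)) = p + 1 := by
    unfold exceptionalForm at h
    have hQ0 : ∑ i, x (.inr (.inl i)) ^ 2 = 0 := by nlinarith
    have hg0 : gadget (p + 1) (x (.inr (.inr ()))) = 0 := by nlinarith
    rw [hQ0, hg0] at h
    linarith
  have hle (j : Fin p) : gadget (p + 1) (x (.inl j)) ≤ 1 := by
    have := hle_sum j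
    rcases gadget_eq_zero_or_one_or_ge hN (x (.inl j)) with h | h | h <;> omega
  have : ∑ j, gadget (p + 1) (x (.inl j)) ≤ p := by
    simpa using sum_le_sum fun j (_ : j ∈ univ) => hle j
  omega

lemma exists_exceptionalForm_eq_mul_add (p q : ℕ) {r : ℕ} (hr : r ≤ p) :
    ∃ x, exceptionalForm p x = (p + 2) * q + r := by
  obtain ⟨y, hy⟩ := exists_sum_fin_four_sq_eq q
  refine ⟨Sum.elim (fun j => if (j : ℕ) < r then 1 else 0) (Sum.elim y fun _ => 0), ?_⟩
  simp [exceptionalForm, sum_gadget_indicator _ hr, hy]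
  ring

lemma exists_exceptionalForm_eq_mul_add_two_mul_add_three (p q : ℕ) :
    ∃ x, exceptionalForm p x = (p + 2) * q + (2 * p + 3) := by
  obtain ⟨y, hy⟩ := exists_sum_fin_four_sq_eq q
  exact ⟨Sum.elim 0 (Sum.elim y fun _ => 1), by simp [exceptionalForm, hy]⟩

lemma exists_exceptionalForm_eq {p m : ℕ} (hm : m ≠ p + 1) :
    ∃ x, exceptionalForm p x = m := by
  obtain ⟨q, r, hr, rfl⟩ : ∃ q r, r < p + 2 ∧ m = (p + 2) * q + r :=
    ⟨m / (p + 2), m % (p + 2), Nat.mod_lt _ (by omega), (Nat.div_add_mod m _).symm⟩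
  obtain hrp | rfl : r ≤ p ∨ r = p + 1 := by omega
  · simpa using exists_exceptionalForm_eq_mul_add p q hrp
  · obtain ⟨q, rfl⟩ : ∃ q', q = q' + 1 :=
      Nat.exists_eq_add_one_of_ne_zero (by rintro rfl; simp at hm)
    obtain ⟨x, hx⟩ := exists_exceptionalForm_eq_mul_add_two_mul_add_three p q
    exact ⟨x, by rw [hx]; push_cast; ring⟩

theorem no_finiteness_for_quadratic_polynomials (n : ℕ) (hn : 0 < n) :
    ∃ (k : ℕ) (A : Matrix (Fin k) (Fin k) ℚ) (L : Fin k → ℚ) (C : ℚ),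
      ∀ f : (Fin k → ℤ) → ℚ,
        (∀ x, f x = (∑ i, ∑ j, A i j * (x i : ℚ) * (x j : ℚ)) + (∑ i, L i * (x i : ℚ)) + C) →
        (∀ x, ∃ m : ℕ, f x = (m : ℚ)) ∧
        (∃ x, f x = 0) ∧
        (∀ m : ℕ, m ≠ n → ∃ x, f x = (m : ℚ)) ∧
        (¬ ∃ x, f x = (n : ℚ)) := by
  obtain ⟨p, rfl⟩ := Nat.exists_eq_add_one_of_ne_zero hn.ne'
  let e := Fintype.equivFin (FormVar p)
  refine ⟨_, Matrix.diagonal fun i => (quadCoeff p (e.symm i) : ℚ),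
    fun i => (linCoeff p (e.symm i) : ℚ), 0, fun f hf => ?_⟩
  have hfx (x : Fin _ → ℤ) : f x = exceptionalForm p (x ∘ e) := by
    rw [hf, Matrix.sum_diagonal_mul_mul, add_zero, ← sum_add_distrib,
      exceptionalForm_eq_sum_coeff, ← e.symm.sum_comp]
    simp
  refine ⟨fun x => ⟨(exceptionalForm p (x ∘ e)).toNat, ?_⟩, ⟨0, ?_⟩,
    fun m hm => ?_, ?_⟩
  · rw [hfx, ← Int.cast_natCast, Int.toNat_of_nonneg (exceptionalForm_nonneg p _)]
  · simp [hfx, exceptionalForm]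
  · obtain ⟨x, hx⟩ := exists_exceptionalForm_eq hm
    exact ⟨x ∘ e.symm, by simp [hfx, Function.comp_def, hx]⟩
  · rintro ⟨x, hx⟩
    exact exceptionalForm_ne_succ p (x ∘ e) (by exact_mod_cast (hfx x).symm.trans hx)
end
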